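/- arXiv:1909.00710 — 5 statements merged into one kernel-verified Lean document; each statement's English description precedes it below -/
import Mathlib

section
/- Let X ⊆ ℝⁿ be a convex set and let f₁,…,f_m : ℝⁿ → ℝ be convex functions. If x* ∈ X is a weak Pareto minimizer of f = (f₁,…,f_m) on X, then there exist nonnegative real numbers τ₁,…,τ_m, not all zero, such that x* minimizes the weighted sum τ₁f₁(x) + … + τ_m f_m(x) over all x ∈ X. -/
/-!
The values `(fᵢ(x))ᵢ, x ∈ X`, pushed strictly upward, form an open convex upper set in `ℝᵐ`,
and weak Pareto minimality of `x*` says exactly that `(fᵢ(x*))ᵢ` lies outside it. Separating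
that point from the set by a hyperplane gives the weights: upward closedness forces them to be
nonnegative, and letting the upward push tend to zero turns the strict separation into the
minimality of `x*` for the weighted sum.
-/

open Set Filter Topology

section StrictUpperImage

variable {ι E : Type*}

def strictUpperImage (X : Set E) (f : ι → E → ℝ) : Set (ι → ℝ) :=
  {y | ∃ x ∈ X, ∀ i, f i x < y i}

theorem convex_strictUpperImage [AddCommGroup E] [Module ℝ E] {X : Set E} {f : ι → E → ℝ}
    (hX : Convex ℝ X) (hf : ∀ i, ConvexOn ℝ X (f i)) : Convex ℝ (strictUpperImage X f) := by
  rintro y₁ ⟨x₁, hx₁, hy₁⟩ y₂ ⟨x₂, hx₂, hy₂⟩ a b ha hb hab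
  refine ⟨a • x₁ + b • x₂, hX hx₁ hx₂ ha hb hab, fun i => ?_⟩
  have hgap := convex_Ioi (0 : ℝ) (sub_pos.2 (hy₁ i)) (sub_pos.2 (hy₂ i)) ha hb hab
  have hjensen := (hf i).2 hx₁ hx₂ ha hb hab
  simp only [mem_Ioi, smul_eq_mul, Pi.add_apply, Pi.smul_apply] at hgap hjensen ⊢
  linarith

theorem isUpperSet_strictUpperImage (X : Set E) (f : ι → E → ℝ) :
    IsUpperSet (strictUpperImage X f) :=
  fun _ _ hyz ⟨x, hx, hy⟩ => ⟨x, hx, fun i => (hy i).trans_le (hyz i)⟩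

theorem isOpen_strictUpperImage [Finite ι] (X : Set E) (f : ι → E → ℝ) :
    IsOpen (strictUpperImage X f) := by
  have hunion : strictUpperImage X f = ⋃ x ∈ X, univ.pi fun i => Ioi (f i x) := by
    ext y
    simp [strictUpperImage]
  rw [hunion]
  exact isOpen_biUnion fun x _ => isOpen_set_pi finite_univ fun i _ => isOpen_Ioi

theorem mem_closure_strictUpperImage {X : Set E} {f : ι → E → ℝ} {x : E} (hx : x ∈ X) :
    (fun i => f i x) ∈ closure (strictUpperImage X f) := by
  have hlim : Tendsto (fun ε : ℝ => fun i => f i x + ε) (𝓝[>] 0) (𝓝 fun i => f i x) := by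
    have hcont : Continuous fun ε : ℝ => fun i => f i x + ε := by fun_prop
    exact (hcont.tendsto' 0 _ (by simp)).mono_left nhdsWithin_le_nhds
  refine mem_closure_of_tendsto hlim ?_
  filter_upwards [self_mem_nhdsWithin] with ε hε
  exact ⟨x, hx, fun i => lt_add_of_pos_right _ hε⟩

end StrictUpperImage

theorem nonneg_of_forall_lt_add_mul {b c d : ℝ} (h : ∀ t ≥ 0, b < c + t * d) : 0 ≤ d := by
  by_contra! hd
  have hbc : b < c := by simpa using h 0 le_rfl
  have := h ((c - b) / -d) (div_nonneg (sub_nonneg.2 hbc.le) (neg_nonneg.2 hd.le))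
  rw [div_neg, neg_mul, div_mul_cancel₀ _ hd.ne] at this
  linarith

theorem IsUpperSet.exists_nonneg_dotProduct_le {ι : Type*} [Fintype ι] {A : Set (ι → ℝ)}
    (hup : IsUpperSet A) (hconv : Convex ℝ A) (hopen : IsOpen A) (hne : A.Nonempty)
    {v : ι → ℝ} (hv : v ∉ A) :
    ∃ τ : ι → ℝ, (∀ i, 0 ≤ τ i) ∧ τ ≠ 0 ∧ ∀ y ∈ closure A, τ ⬝ᵥ v ≤ τ ⬝ᵥ y := by
  classical
  obtain ⟨φ, hφ⟩ := geometric_hahn_banach_point_open hconv hopen hv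
  set τ : ι → ℝ := fun i => φ fun j => if i = j then 1 else 0
  have hφτ : ∀ y, φ y = τ ⬝ᵥ y := fun y => by
    rw [dotProduct_comm]
    exact LinearMap.pi_apply_eq_sum_univ (φ : (ι → ℝ) →ₗ[ℝ] ℝ) y
  obtain ⟨a, ha⟩ := hne
  refine ⟨τ, fun i => ?_, fun hτ => ?_, fun y hy => ?_⟩
  · refine nonneg_of_forall_lt_add_mul (b := φ v) (c := φ a) fun t ht => ?_
    have hbasis : 0 ≤ fun j => if i = j then (1 : ℝ) else 0 := fun j => by
      simp only [Pi.zero_apply]; split_ifs <;> norm_num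
    have hmem := hup (le_add_of_nonneg_right (smul_nonneg ht hbasis)) ha
    simpa using hφ _ hmem
  · have := hφ a ha
    simp only [hφτ, hτ, zero_dotProduct, lt_self_iff_false] at this
  · simp only [← hφτ]
    exact closure_minimal (fun b hb => (hφ b hb).le) (isClosed_le continuous_const φ.continuous) hy

/-- For convex data, every weak Pareto minimizer of `f = (f₁, …, f_m)` on a
convex set `X` minimizes some nonnegative, not-all-zero weighted sum of the objectives over `X`. -/
theorem weak_pareto_is_weighted_sum_min {n m : ℕ}
    (X : Set (EuclideanSpace ℝ (Fin n))) (hX : Convex ℝ X)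
    (f : Fin m → EuclideanSpace ℝ (Fin n) → ℝ)
    (hf : ∀ i, ConvexOn ℝ Set.univ (f i))
    (xstar : EuclideanSpace ℝ (Fin n)) (hxstar : xstar ∈ X)
    (hweak : ¬ ∃ x ∈ X, ∀ i, f i x < f i xstar) :
    ∃ τ : Fin m → ℝ, (∀ i, 0 ≤ τ i) ∧ τ ≠ 0 ∧
      ∀ x ∈ X, ∑ i, τ i * f i xstar ≤ ∑ i, τ i * f i x := by
  have hne : (strictUpperImage X f).Nonempty :=
    ⟨fun i => f i xstar + 1, xstar, hxstar, fun i => lt_add_one _⟩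
  obtain ⟨τ, hτ_nonneg, hτ_ne, hτ⟩ := (isUpperSet_strictUpperImage X f).exists_nonneg_dotProduct_le
    (convex_strictUpperImage hX fun i => (hf i).subset (subset_univ X) hX)
    (isOpen_strictUpperImage X f) hne hweak
  exact ⟨τ, hτ_nonneg, hτ_ne, fun x hx => hτ _ (mem_closure_strictUpperImage hx)⟩
end

section
/- Let X ⊆ ℝⁿ be a closed convex set and let f₁,…,f_m : ℝⁿ → ℝ be convex differentiable functions. Then x* ∈ X is a weak Pareto minimizer of f = (f₁,…,f_m) on X if and only if there exist nonnegative real numbers τ₁,…,τ_m, not all zero, such that −(τ₁∇f₁(x*) + … + τ_m∇f_m(x*)) belongs to the normal cone N_X(x*). -/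
/-!
If `x*` is a weak Pareto minimizer, no direction `x - x*` with `x ∈ X` decreases every `fᵢ` to
first order, so the convex set `{(⟪∇fᵢ(x*), x - x*⟫)ᵢ | x ∈ X} ⊆ ℝᵐ` misses the open negative
orthant; a hyperplane separating the two has a normal `τ` with the required properties (a
Gordan-type alternative). Conversely, convexity gives `⟪∇fᵢ(x*), x - x*⟫ ≤ fᵢ(x) - fᵢ(x*)`, so a
point improving every objective would make the `τ`-weighted sum of these inner products negative.
-/

open RealInnerProductSpace Set Filter Topology AffineMap

theorem Convex.exists_nonneg_weights_of_not_exists_neg {ι : Type*} [Fintype ι]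
    {S : Set (ι → ℝ)} (hS : Convex ℝ S) (hne : S.Nonempty) (h : ¬ ∃ y ∈ S, ∀ i, y i < 0) :
    ∃ τ : ι → ℝ, (∀ i, 0 ≤ τ i) ∧ τ ≠ 0 ∧ ∀ y ∈ S, 0 ≤ ∑ i, τ i * y i := by
  classical
  set N : Set (ι → ℝ) := univ.pi fun _ => Iio 0
  have hdisj : Disjoint N S :=
    disjoint_left.2 fun y hyN hyS => h ⟨y, hyS, fun i => hyN i (mem_univ i)⟩
  obtain ⟨φ, u, hφN, hφS⟩ := geometric_hahn_banach_open (convex_pi fun _ _ => convex_Iio 0)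
    (isOpen_set_pi finite_univ fun _ _ => isOpen_Iio) hS hdisj
  have hφ_le : ∀ y : ι → ℝ, y ≤ 0 → φ y ≤ u := by
    have : closure N ⊆ {y | φ y ≤ u} :=
      closure_minimal (fun y hy => (hφN y hy).le) (isClosed_le φ.continuous continuous_const)
    intro y hy
    refine this ?_
    rw [closure_pi_set]
    exact fun i _ => by simpa using hy i
  set τ : ι → ℝ := fun i => φ (Pi.single i 1)
  have hφ : ∀ y, φ y = ∑ i, τ i * y i := fun y => by
    conv_lhs => rw [← Finset.univ_sum_single y, map_sum]
    refine Finset.sum_congr rfl fun i _ => ?_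
    rw [mul_comm, ← smul_eq_mul, ← map_smul, ← Pi.single_smul', smul_eq_mul, mul_one]
  have hu : 0 ≤ u := by simpa using hφ_le 0 le_rfl
  refine ⟨τ, fun i => ?_, fun hτ => ?_, fun y hy => hφ y ▸ hu.trans (hφS y hy)⟩
  · -- `φ ≤ u` on the cone `y ≤ 0` forces `φ ≤ 0` there; test it on a large multiple of `-eᵢ`.
    by_contra! hneg
    have hle := hφ_le (((u + 1) / τ i) • Pi.single i 1) fun j => by
      rcases eq_or_ne j i with rfl | hj
      · simpa using div_nonpos_of_nonneg_of_nonpos (by linarith) hneg.le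
      · simp [hj]
    rw [map_smul, smul_eq_mul, div_mul_cancel₀ _ hneg.ne] at hle
    linarith
  · obtain ⟨y, hy⟩ := hne
    have h1 := hφN (-1) fun i _ => by simp
    have h2 := hφS y hy
    simp only [hφ, hτ, Pi.zero_apply, zero_mul, Finset.sum_const_zero] at h1 h2
    linarith

theorem Convex.exists_nonneg_weights_of_not_exists_linear_neg {ι E : Type*} [Fintype ι]
    [AddCommGroup E] [Module ℝ E] {X : Set E} (hX : Convex ℝ X) {x₀ : E} (hx₀ : x₀ ∈ X)
    (ℓ : ι → E →ₗ[ℝ] ℝ) (h : ¬ ∃ x ∈ X, ∀ i, ℓ i (x - x₀) < 0) :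
    ∃ τ : ι → ℝ, (∀ i, 0 ≤ τ i) ∧ τ ≠ 0 ∧ ∀ x ∈ X, 0 ≤ ∑ i, τ i * ℓ i (x - x₀) := by
  set A : E →ᵃ[ℝ] ι → ℝ := (LinearMap.pi ℓ).toAffineMap - AffineMap.const ℝ E (fun i => ℓ i x₀)
  have hA : ∀ x, A x = fun i => ℓ i (x - x₀) := fun x => by ext; simp [A]
  obtain ⟨τ, hτ, hτ0, hS⟩ := (hX.affine_image A).exists_nonneg_weights_of_not_exists_neg
    ⟨A x₀, mem_image_of_mem A hx₀⟩ (by simpa [hA] using h)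
  exact ⟨τ, hτ, hτ0, fun x hx => by simpa [hA] using hS (A x) (mem_image_of_mem A hx)⟩

theorem HasFDerivAt.hasDerivAt_comp_lineMap {E : Type*} [NormedAddCommGroup E] [NormedSpace ℝ E]
    {f : E → ℝ} {f' : E →L[ℝ] ℝ} {x : E} (hf : HasFDerivAt f f' x) (y : E) :
    HasDerivAt (f ∘ (lineMap x y : ℝ → E)) (f' (y - x)) 0 := by
  rw [← lineMap_apply_zero x y (k := ℝ)] at hf
  exact hf.comp_hasDerivAt 0 hasDerivAt_lineMap

theorem HasDerivAt.eventually_nhdsGT_lt {g : ℝ → ℝ} {g' a : ℝ} (hg : HasDerivAt g g' a)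
    (hg' : g' < 0) : ∀ᶠ t in 𝓝[>] a, g t < g a := by
  have hslope : ∀ᶠ t in 𝓝[>] a, slope g a t < 0 :=
    ((hasDerivAt_iff_tendsto_slope.mp hg).mono_left
      (nhdsWithin_mono _ fun _ ht => ne_of_gt ht)).eventually_lt_const hg'
  filter_upwards [hslope, self_mem_nhdsWithin] with t hneg (ht : a < t)
  have hdiff := sub_smul_slope g a t
  rw [smul_eq_mul, vsub_eq_sub] at hdiff
  linarith [mul_neg_of_pos_of_neg (sub_pos.mpr ht) hneg]

theorem Convex.exists_forall_lt_of_fderiv_neg {ι E : Type*} [Finite ι] [NormedAddCommGroup E]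
    [NormedSpace ℝ E] {X : Set E} (hX : Convex ℝ X) {x₀ x : E} (hx₀ : x₀ ∈ X) (hx : x ∈ X)
    {f : ι → E → ℝ} {f' : ι → E →L[ℝ] ℝ} (hf : ∀ i, HasFDerivAt (f i) (f' i) x₀)
    (hneg : ∀ i, f' i (x - x₀) < 0) : ∃ y ∈ X, ∀ i, f i y < f i x₀ := by
  have hdescent : ∀ᶠ t in 𝓝[>] (0 : ℝ), ∀ i, f i (lineMap x₀ x t) < f i x₀ :=
    eventually_all.2 fun i => by
      simpa using (HasFDerivAt.hasDerivAt_comp_lineMap (hf i) x).eventually_nhdsGT_lt (hneg i)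
  obtain ⟨t, hlt, ht⟩ := (hdescent.and (Ioo_mem_nhdsGT zero_lt_one)).exists
  exact ⟨lineMap x₀ x t, hX.lineMap_mem hx₀ hx (Ioo_subset_Icc_self ht), hlt⟩

theorem ConvexOn.hasFDerivAt_apply_sub_le {E : Type*} [NormedAddCommGroup E] [NormedSpace ℝ E]
    {f : E → ℝ} {f' : E →L[ℝ] ℝ} {x : E} (hconv : ConvexOn ℝ univ f) (hf : HasFDerivAt f f' x)
    (y : E) : f' (y - x) ≤ f y - f x := by
  simpa [slope_def_field] using (hconv.comp_affineMap (lineMap x y)).le_slope_of_hasDerivAt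
    (mem_univ 0) (mem_univ 1) zero_lt_one (HasFDerivAt.hasDerivAt_comp_lineMap hf y)

theorem weak_pareto_iff_normal_cone_general {n m : ℕ}
    (X : Set (EuclideanSpace ℝ (Fin n))) (hX : Convex ℝ X)
    (f : Fin m → EuclideanSpace ℝ (Fin n) → ℝ)
    (hfconv : ∀ i, ConvexOn ℝ Set.univ (f i))
    (hfdiff : ∀ i, Differentiable ℝ (f i))
    (xstar : EuclideanSpace ℝ (Fin n)) (hxstar : xstar ∈ X) :
    (¬ ∃ x ∈ X, ∀ i, f i x < f i xstar) ↔
      ∃ τ : Fin m → ℝ, (∀ i, 0 ≤ τ i) ∧ τ ≠ 0 ∧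
        (-(∑ i, τ i • gradient (f i) xstar)) ∈
          {v : EuclideanSpace ℝ (Fin n) | ∀ x ∈ X, ⟪v, x - xstar⟫ ≤ 0} := by
  have hf : ∀ i, HasFDerivAt (f i) (fderiv ℝ (f i) xstar) xstar := fun i =>
    (hfdiff i xstar).hasFDerivAt
  have hinner : ∀ (τ : Fin m → ℝ) x, ⟪-(∑ i, τ i • gradient (f i) xstar), x - xstar⟫ =
      -∑ i, τ i * fderiv ℝ (f i) xstar (x - xstar) := fun τ x => by
    simp only [inner_neg_left, sum_inner, real_inner_smul_left, inner_gradient_left]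
  simp only [mem_ofPred_eq, hinner, neg_nonpos]
  constructor
  · intro hpareto
    exact hX.exists_nonneg_weights_of_not_exists_linear_neg hxstar
      (fun i => (fderiv ℝ (f i) xstar : EuclideanSpace ℝ (Fin n) →ₗ[ℝ] ℝ))
      fun ⟨x, hx, hneg⟩ => hpareto (hX.exists_forall_lt_of_fderiv_neg hxstar hx hf hneg)
  · rintro ⟨τ, hτ, hτ0, hsum⟩ ⟨x, hx, hlt⟩
    have hneg : ∀ i, fderiv ℝ (f i) xstar (x - xstar) < 0 := fun i =>
      ((hfconv i).hasFDerivAt_apply_sub_le (hf i) x).trans_lt (sub_neg.2 (hlt i))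
    obtain ⟨j, hj⟩ := Function.ne_iff.1 hτ0
    have hsum_neg := Finset.sum_lt_sum
      (fun i _ => mul_nonpos_of_nonneg_of_nonpos (hτ i) (hneg i).le)
      ⟨j, Finset.mem_univ j, mul_neg_of_pos_of_neg ((hτ j).lt_of_ne' hj) (hneg j)⟩
    rw [Finset.sum_const_zero] at hsum_neg
    linarith [hsum x hx]

/-- For a closed convex set `X` and convex differentiable objectives,
`x* ∈ X` is a weak Pareto minimizer of `f = (f₁, …, f_m)` on `X` iff there are nonnegative
weights `τ`, not all zero, with `-(∑ i, τ i • ∇fᵢ(x*))` in the normal cone `N_X(x*)`. -/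
theorem weak_pareto_iff_normal_cone {n m : ℕ}
    (X : Set (EuclideanSpace ℝ (Fin n))) (hXc : IsClosed X) (hX : Convex ℝ X)
    (f : Fin m → EuclideanSpace ℝ (Fin n) → ℝ)
    (hfconv : ∀ i, ConvexOn ℝ Set.univ (f i))
    (hfdiff : ∀ i, Differentiable ℝ (f i))
    (xstar : EuclideanSpace ℝ (Fin n)) (hxstar : xstar ∈ X) :
    (¬ ∃ x ∈ X, ∀ i, f i x < f i xstar) ↔
      ∃ τ : Fin m → ℝ, (∀ i, 0 ≤ τ i) ∧ τ ≠ 0 ∧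
        (-(∑ i, τ i • gradient (f i) xstar)) ∈
          {v : EuclideanSpace ℝ (Fin n) | ∀ x ∈ X, ⟪v, x - xstar⟫ ≤ 0} :=
  weak_pareto_iff_normal_cone_general X hX f hfconv hfdiff xstar hxstar
end

section
/- Let f₁,…,f_m : ℝⁿ → ℝ and g₁,…,g_k : ℝⁿ → ℝ be convex differentiable functions, let X = {x ∈ ℝⁿ : g_j(x) ≤ 0 for all j = 1,…,k}, and suppose the Slater condition holds, i.e., there exists x̂ ∈ ℝⁿ with g_j(x̂) < 0 for all j. If x* ∈ X is a weak Pareto minimizer of f = (f₁,…,f_m) on X, then there exist nonnegative real numbers τ₁,…,τ_m, not all zero, and nonnegative real numbers λ₁,…,λ_k such that τ₁∇f₁(x*) + … + τ_m∇f_m(x*) + λ₁∇g₁(x*) + … + λ_k∇g_k(x*) = 0 and λ_j g_j(x*) = 0 for all j = 1,…,k. -/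
/-!
The set `C = {(u, v) | ∃ x, fᵢ(x) - fᵢ(x*) < uᵢ, gⱼ(x) < vⱼ}` is open and convex, and weak Pareto
minimality of `x*` says that `0 ∉ C`. A functional separating `0` from `C` has nonnegative
coefficients `(τ, λ)`, not all zero, since `C` is closed under increasing coordinates; positivity on
`C` gives `∑ τᵢ (fᵢ(x) - fᵢ(x*)) + ∑ λⱼ gⱼ(x) ≥ 0` for all `x`. At `x = x*` this forces
complementary slackness, and then `x*` is a global minimizer of the Lagrangian
`∑ τᵢ fᵢ + ∑ λⱼ gⱼ`, whose gradient therefore vanishes there. Finally, `τ = 0` is impossible at a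
Slater point, where `∑ λⱼ gⱼ < 0`.
-/

open Set Filter Topology

lemma nonneg_of_forall_pos_add_mul_pos {a b : ℝ} (h : ∀ t > 0, 0 < a + t * b) :
    0 ≤ a ∧ 0 ≤ b := by
  constructor
  · have hlim : Tendsto (fun t => a + t * b) (𝓝[>] 0) (𝓝 a) :=
      ((by fun_prop : Continuous fun t : ℝ => a + t * b).tendsto' 0 a (by simp)).mono_left
        nhdsWithin_le_nhds
    exact ge_of_tendsto hlim (eventually_nhdsWithin_of_forall fun t ht => (h t ht).le)
  · by_contra! hb
    have ht : (|a| + 1) / -b * b = -(|a| + 1) := by field_simp [hb.ne]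
    have := h ((|a| + 1) / -b) (div_pos (by positivity) (neg_pos.2 hb))
    linarith [le_abs_self a]

lemma isOpen_setOf_exists_forall_lt {E ι : Type*} [Finite ι] (s : Set E) (h : ι → E → ℝ) :
    IsOpen {u : ι → ℝ | ∃ x ∈ s, ∀ l, h l x < u l} := by
  have : {u : ι → ℝ | ∃ x ∈ s, ∀ l, h l x < u l} = ⋃ x ∈ s, univ.pi fun l => Ioi (h l x) := by
    ext u; simp
  rw [this]
  exact isOpen_biUnion fun x _ => isOpen_set_pi finite_univ fun l _ => isOpen_Ioi

lemma convex_setOf_exists_forall_lt {E ι : Type*} [AddCommGroup E] [Module ℝ E] {s : Set E}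
    {h : ι → E → ℝ} (hs : Convex ℝ s) (hconv : ∀ l, ConvexOn ℝ s (h l)) :
    Convex ℝ {u : ι → ℝ | ∃ x ∈ s, ∀ l, h l x < u l} := by
  rintro u ⟨x, hxs, hxu⟩ v ⟨y, hys, hyv⟩ a b ha hb hab
  refine ⟨a • x + b • y, hs hxs hys ha hb hab, fun l => ?_⟩
  have hgap := convex_Ioi (0 : ℝ) (sub_pos.2 (hxu l)) (sub_pos.2 (hyv l)) ha hb hab
  have hjensen := (hconv l).2 hxs hys ha hb hab
  simp only [mem_Ioi, smul_eq_mul] at hgap hjensen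
  simp only [Pi.add_apply, Pi.smul_apply, smul_eq_mul]
  linarith

lemma ContinuousLinearMap.apply_eq_sum_mul_apply_single {ι : Type*} [Fintype ι] [DecidableEq ι]
    (φ : (ι → ℝ) →L[ℝ] ℝ) (u : ι → ℝ) : φ u = ∑ l, φ (Pi.single l 1) * u l := by
  conv_lhs => rw [pi_eq_sum_univ' u]
  simp [mul_comm]

/-- The convex Gordan alternative (Fan–Glicksberg–Hoffman). -/
theorem exists_nonneg_ne_zero_sum_mul_nonneg_of_convexOn {E ι : Type*} [AddCommGroup E]
    [Module ℝ E] [Fintype ι] {s : Set E} {h : ι → E → ℝ} (hs : Convex ℝ s) (hne : s.Nonempty)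
    (hconv : ∀ l, ConvexOn ℝ s (h l)) (hinc : ¬ ∃ x ∈ s, ∀ l, h l x < 0) :
    ∃ μ : ι → ℝ, (∀ l, 0 ≤ μ l) ∧ μ ≠ 0 ∧ ∀ x ∈ s, 0 ≤ ∑ l, μ l * h l x := by
  classical
  obtain ⟨φ, hφC⟩ := geometric_hahn_banach_point_open (convex_setOf_exists_forall_lt hs hconv)
    (isOpen_setOf_exists_forall_lt s h) (x := 0) fun ⟨x, hxs, hx⟩ => hinc ⟨x, hxs, hx⟩
  have hφ : ∀ x ∈ s, ∀ w : ι → ℝ, (∀ l, 0 < w l) → 0 < φ (fun l => h l x) + φ w := by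
    intro x hx w hw
    rw [← map_add, ← map_zero φ]
    exact hφC _ ⟨x, hx, fun l => lt_add_of_pos_right _ (hw l)⟩
  have hφ_eq : ∀ u, φ u = ∑ l, φ (Pi.single l 1) * u l := φ.apply_eq_sum_mul_apply_single
  obtain ⟨x₀, hx₀⟩ := hne
  refine ⟨fun l => φ (Pi.single l 1), fun l => ?_, fun hμ => ?_, fun x hx => ?_⟩
  · refine (nonneg_of_forall_pos_add_mul_pos (a := φ (fun l => h l x₀) + φ 1) fun t ht => ?_).2
    have hw : ∀ l', 0 < (1 + t • Pi.single l 1 : ι → ℝ) l' := fun l' => by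
      rcases eq_or_ne l' l with rfl | hl <;> simp [*, add_pos]
    simpa [add_assoc] using hφ x₀ hx₀ _ hw
  · have hφ0 : ∀ u, φ u = 0 := fun u => by
      rw [hφ_eq u]
      exact Finset.sum_eq_zero fun l _ => by simp [congrFun hμ l]
    simpa [hφ0] using hφ x₀ hx₀ 1 fun _ => one_pos
  · rw [← hφ_eq]
    refine (nonneg_of_forall_pos_add_mul_pos (b := φ 1) fun t ht => ?_).1
    simpa using hφ x hx (t • 1) fun _ => by simpa using ht

theorem IsLocalMin.sum_smul_gradient_eq_zero {F ι : Type*} [NormedAddCommGroup F]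
    [InnerProductSpace ℝ F] [CompleteSpace F] [Fintype ι] {a : ι → ℝ} {h : ι → F → ℝ} {x : F}
    (hmin : IsLocalMin (fun y => ∑ l, a l * h l y) x) (hd : ∀ l, DifferentiableAt ℝ (h l) x) :
    ∑ l, a l • gradient (h l) x = 0 := by
  have hD : HasFDerivAt (fun y => ∑ l, a l * h l y) (∑ l, a l • fderiv ℝ (h l) x) x :=
    HasFDerivAt.fun_sum fun l _ => (hd l).hasFDerivAt.const_mul (a l)
  calc ∑ l, a l • gradient (h l) x
      = (InnerProductSpace.toDual ℝ F).symm (∑ l, a l • fderiv ℝ (h l) x) := by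
        simp only [gradient, map_sum, map_smul]
    _ = 0 := by rw [hmin.hasFDerivAt_eq_zero hD, map_zero]

lemma mul_eq_zero_of_sum_mul_nonneg {ι : Type*} [Fintype ι] {a b : ι → ℝ} (ha : ∀ j, 0 ≤ a j)
    (hb : ∀ j, b j ≤ 0) (hsum : 0 ≤ ∑ j, a j * b j) (j : ι) : a j * b j = 0 := by
  have hle : ∀ j ∈ Finset.univ, a j * b j ≤ 0 := fun j _ =>
    mul_nonpos_of_nonneg_of_nonpos (ha j) (hb j)
  exact (Finset.sum_eq_zero_iff_of_nonpos hle).1 (le_antisymm (Finset.sum_nonpos hle) hsum) j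
    (Finset.mem_univ j)

lemma sum_mul_neg_of_ne_zero {ι : Type*} [Fintype ι] {a b : ι → ℝ} (ha : ∀ j, 0 ≤ a j)
    (ha0 : a ≠ 0) (hb : ∀ j, b j < 0) : ∑ j, a j * b j < 0 := by
  obtain ⟨j, hj⟩ := Function.ne_iff.1 ha0
  exact Finset.sum_neg' (fun j _ => mul_nonpos_of_nonneg_of_nonpos (ha j) (hb j).le)
    ⟨j, Finset.mem_univ j, mul_neg_of_pos_of_neg ((ha j).lt_of_ne' hj) (hb j)⟩

theorem exists_fritzJohn_multipliers {E ι κ : Type*} [AddCommGroup E] [Module ℝ E] [Fintype ι]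
    [Fintype κ] {s : Set E} {f : ι → E → ℝ} {g : κ → E → ℝ} {x₀ : E} (hs : Convex ℝ s)
    (hf : ∀ i, ConvexOn ℝ s (f i)) (hg : ∀ j, ConvexOn ℝ s (g j)) (hx₀ : x₀ ∈ s)
    (hweak : ¬ ∃ x ∈ s, (∀ j, g j x ≤ 0) ∧ ∀ i, f i x < f i x₀) :
    ∃ (τ : ι → ℝ) (lam : κ → ℝ), (∀ i, 0 ≤ τ i) ∧ (∀ j, 0 ≤ lam j) ∧ Sum.elim τ lam ≠ 0 ∧
      ∀ x ∈ s, 0 ≤ ∑ i, τ i * (f i x - f i x₀) + ∑ j, lam j * g j x := by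
  obtain ⟨μ, hμ0, hμ, hμh⟩ := exists_nonneg_ne_zero_sum_mul_nonneg_of_convexOn hs ⟨x₀, hx₀⟩
    (h := Sum.elim (fun i x => f i x - f i x₀) g)
    (by rintro (i | j)
        · exact (hf i).sub (concaveOn_const _ hs)
        · exact hg j)
    (fun ⟨x, hx, hneg⟩ =>
      hweak ⟨x, hx, fun j => (hneg (.inr j)).le, fun i => sub_neg.1 (hneg (.inl i))⟩)
  refine ⟨μ ∘ .inl, μ ∘ .inr, fun i => hμ0 _, fun j => hμ0 _, ?_, fun x hx => ?_⟩
  · rwa [Sum.elim_comp_inl_inr]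
  · simpa [Fintype.sum_sum_type] using hμh x hx

/-- KKT necessary conditions for a weak Pareto minimizer under the Slater
condition: there exist nonnegative multipliers `τ` (not all zero) and `λ` with
`∑ τᵢ ∇fᵢ(x*) + ∑ λⱼ ∇gⱼ(x*) = 0` and complementary slackness. -/
theorem weak_pareto_kkt_necessary {n m k : ℕ}
    (f : Fin m → EuclideanSpace ℝ (Fin n) → ℝ)
    (g : Fin k → EuclideanSpace ℝ (Fin n) → ℝ)
    (hfconv : ∀ i, ConvexOn ℝ Set.univ (f i))
    (hfdiff : ∀ i, Differentiable ℝ (f i))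
    (hgconv : ∀ j, ConvexOn ℝ Set.univ (g j))
    (hgdiff : ∀ j, Differentiable ℝ (g j))
    (X : Set (EuclideanSpace ℝ (Fin n)))
    (hXdef : X = {x | ∀ j, g j x ≤ 0})
    (slater : ∃ xhat : EuclideanSpace ℝ (Fin n), ∀ j, g j xhat < 0)
    (xstar : EuclideanSpace ℝ (Fin n)) (hxstar : xstar ∈ X)
    (hweak : ¬ ∃ x ∈ X, ∀ i, f i x < f i xstar) :
    ∃ (τ : Fin m → ℝ) (lam : Fin k → ℝ),
      (∀ i, 0 ≤ τ i) ∧ τ ≠ 0 ∧ (∀ j, 0 ≤ lam j) ∧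
      (∑ i, τ i • gradient (f i) xstar) + (∑ j, lam j • gradient (g j) xstar) = 0 ∧
      (∀ j, lam j * g j xstar = 0) := by
  subst hXdef
  obtain ⟨τ, lam, hτ0, hlam0, hne, hL⟩ := exists_fritzJohn_multipliers convex_univ
    hfconv hgconv (mem_univ xstar) (fun ⟨x, _, hgx, hfx⟩ => hweak ⟨x, hgx, hfx⟩)
  have hcs : ∀ j, lam j * g j xstar = 0 :=
    mul_eq_zero_of_sum_mul_nonneg hlam0 hxstar (by simpa using hL xstar (mem_univ _))
  have hτ : τ ≠ 0 := by
    rintro rfl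
    obtain ⟨xhat, hxhat⟩ := slater
    have hlam : lam ≠ 0 := by rintro rfl; exact hne Sum.elim_zero_zero
    refine (sum_mul_neg_of_ne_zero hlam0 hlam hxhat).not_ge ?_
    simpa using hL xhat (mem_univ _)
  -- by complementary slackness, `hL` says that `xstar` minimizes the Lagrangian
  have hmin : IsLocalMin (fun x => ∑ l, Sum.elim τ lam l * Sum.elim f g l x) xstar :=
    Eventually.of_forall fun x => by
      have hLx := hL x (mem_univ x)
      simp only [mul_sub, Finset.sum_sub_distrib] at hLx
      simp only [Fintype.sum_sum_type, Sum.elim_inl, Sum.elim_inr,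
        Finset.sum_eq_zero fun j _ => hcs j]
      linarith
  refine ⟨τ, lam, hτ0, hτ, hlam0, ?_, hcs⟩
  simpa [Fintype.sum_sum_type] using
    hmin.sum_smul_gradient_eq_zero (by rintro (i | j); exacts [hfdiff i xstar, hgdiff j xstar])
end

section
/- Let f₁,…,f_m : ℝⁿ → ℝ and g₁,…,g_k : ℝⁿ → ℝ be convex differentiable functions and let X = {x ∈ ℝⁿ : g_j(x) ≤ 0 for all j = 1,…,k}. Let x₀ ∈ X be a Pareto minimizer of f = (f₁,…,f_m) on X, set X̂(x₀) = {x ∈ X : fᵢ(x) ≤ fᵢ(x₀) for all i}, and suppose the strong Abadie type regularity condition holds at x₀, i.e., the tangent cone of X̂(x₀) at x₀ equals V(x₀) = {h ∈ ℝⁿ : ⟨∇fᵢ(x₀), h⟩ ≤ 0 for all i = 1,…,m and ⟨∇g_r(x₀), h⟩ ≤ 0 for all r with g_r(x₀) = 0}. Then there exist real numbers λ₁* > 0, …, λ_m* > 0 and nonnegative real numbers μ₁*, …, μ_k* such that λ₁*∇f₁(x₀) + … + λ_m*∇f_m(x₀) + μ₁*∇g₁(x₀) + … + μ_k*∇g_k(x₀)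 = 0 and μ_j* g_j(x₀) = 0 for all j = 1,…,k. -/
/-!
Pareto minimality makes each `fᵢ` minimal at `x₀` on `X̂(x₀)`, so `⟪∇fᵢ(x₀), h⟫ ≥ 0` for every
tangent direction `h` of `X̂(x₀)`, and by the Abadie condition for every `h ∈ V(x₀)`. Hence
`-∑ᵢ ∇fᵢ(x₀)` has nonpositive inner product with all of `V(x₀)`, and Farkas' lemma writes it as a
nonnegative combination of the `∇fᵢ(x₀)` and of the active `∇g_r(x₀)`; moving `∑ᵢ ∇fᵢ(x₀)` to the
other side raises every objective multiplier by `1`.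

Farkas' lemma needs the finitely generated cone to be closed. By the conic Carathéodory theorem
it is the union of the finitely many cones spanned by linearly independent subfamilies, and each
of these is the image of a closed orthant under an injective linear map.
-/

open RealInnerProductSpace

/-- The tangent cone of `S` at `x₀`: directions `d` for which there are sequences `t_k ≥ 0`
and `y_k ∈ S` with `y_k → x₀` and `t_k • (y_k − x₀) → d`. -/
def tangentConeOf {n : ℕ} (S : Set (EuclideanSpace ℝ (Fin n)))
    (x₀ : EuclideanSpace ℝ (Fin n)) : Set (EuclideanSpace ℝ (Fin n)) :=
  {d | ∃ (t : ℕ → ℝ) (y : ℕ → EuclideanSpace ℝ (Fin n)),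
        (∀ j, 0 ≤ t j) ∧ (∀ j, y j ∈ S) ∧
        Filter.Tendsto y Filter.atTop (nhds x₀) ∧
        Filter.Tendsto (fun j => t j • (y j - x₀)) Filter.atTop (nhds d)}

open Set PointedCone

section Hull

variable {𝕜 E ι : Type*} [Field 𝕜] [LinearOrder 𝕜] [IsStrictOrderedRing 𝕜]
  [AddCommGroup E] [Module 𝕜 E] {v : ι → E} {s : Finset ι} {x : E}

theorem PointedCone.mem_hull_image_finset_iff :
    x ∈ hull 𝕜 (v '' s) ↔ ∃ α : ι → 𝕜, (∀ i ∈ s, 0 ≤ α i) ∧ ∑ i ∈ s, α i • v i = x := by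
  rw [Submodule.mem_span_image_finset_iff_exists_fun']
  constructor
  · rintro ⟨c, hc⟩
    exact ⟨fun i => c i, fun i _ => (c i).2, hc⟩
  · rintro ⟨α, hα, rfl⟩
    refine ⟨fun i => ⟨max (α i) 0, le_max_right _ _⟩, Finset.sum_congr rfl fun i hi => ?_⟩
    simp [Nonneg.mk_smul, max_eq_left (hα i hi)]

theorem PointedCone.exists_mem_hull_image_erase [DecidableEq ι]
    (hs : ¬ LinearIndepOn 𝕜 v (s : Set ι)) (hx : x ∈ hull 𝕜 (v '' s)) : ∃ i₀ ∈ s, x ∈ hull 𝕜 (v '' ↑(s.erase i₀)) := by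
  obtain ⟨α, hα, rfl⟩ := mem_hull_image_finset_iff.1 hx
  obtain ⟨γ, hγ, hγne⟩ := not_linearIndepOn_finset_iff.1 hs
  wlog hpos : ∃ i ∈ s, 0 < γ i generalizing γ
  · push Not at hpos
    obtain ⟨i, hi, hγi⟩ := hγne
    exact this (-γ) (by simp [hγ]) ⟨i, hi, neg_ne_zero.2 hγi⟩
      ⟨i, hi, neg_pos.2 ((hpos i hi).lt_of_ne hγi)⟩
  -- Move along `-γ` until the first coefficient hits zero.
  obtain ⟨i₀, hi₀, hmin⟩ := (s.filter (0 < γ ·)).exists_min_image (fun i => α i / γ i)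
    (by simpa [Finset.Nonempty] using hpos)
  rw [Finset.mem_filter] at hi₀
  set c := α i₀ / γ i₀
  have hβ : ∀ i ∈ s, 0 ≤ α i - c * γ i := fun i hi => by
    rcases lt_or_ge 0 (γ i) with hγi | hγi
    · have := hmin i (Finset.mem_filter.2 ⟨hi, hγi⟩)
      rw [le_div_iff₀ hγi] at this
      linarith
    · nlinarith [hα i hi, div_nonneg (hα i₀ hi₀.1) hi₀.2.le]
  have hβi₀ : α i₀ - c * γ i₀ = 0 := by
    simp [c, div_mul_cancel₀ _ hi₀.2.ne']
  refine ⟨i₀, hi₀.1, mem_hull_image_finset_iff.2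
    ⟨fun i => α i - c * γ i, fun i hi => hβ i (Finset.mem_of_mem_erase hi), ?_⟩⟩
  rw [Finset.sum_erase _ (by simp only [hβi₀, zero_smul])]
  simp only [sub_smul, mul_smul, Finset.sum_sub_distrib, ← Finset.smul_sum, hγ, smul_zero,
    sub_zero]

theorem PointedCone.exists_linearIndepOn_mem_hull_image (hx : x ∈ hull 𝕜 (v '' s)) :
    ∃ t ⊆ s, LinearIndepOn 𝕜 v (t : Set ι) ∧ x ∈ hull 𝕜 (v '' t) := by
  classical
  induction s using Finset.strongInduction with
  | H s ih =>
    by_cases hs : LinearIndepOn 𝕜 v (s : Set ι)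
    · exact ⟨s, subset_rfl, hs, hx⟩
    obtain ⟨i₀, hi₀, hxi₀⟩ := exists_mem_hull_image_erase hs hx
    obtain ⟨t, hts, ht, hxt⟩ := ih _ (Finset.erase_ssubset hi₀) hxi₀
    exact ⟨t, hts.trans (Finset.erase_subset _ _), ht, hxt⟩

end Hull

section Closed

variable {E ι : Type*} [NormedAddCommGroup E] [NormedSpace ℝ E]

theorem PointedCone.isClosed_hull_range_of_linearIndependent [Fintype ι] {w : ι → E}
    (hw : LinearIndependent ℝ w) : IsClosed (hull ℝ (range w) : Set E) := by
  have hhull : (hull ℝ (range w) : Set E) =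
      Fintype.linearCombination ℝ w '' {β | ∀ i, 0 ≤ β i} := by
    ext x
    rw [← image_univ, ← Finset.coe_univ, SetLike.mem_coe, mem_hull_image_finset_iff]
    simp [Fintype.linearCombination_apply]
  rw [hhull]
  refine (LinearMap.isClosedEmbedding_of_injective ?_).isClosedMap _ ?_
  · exact LinearMap.ker_eq_bot.2 (linearIndependent_iff_injective_fintypeLinearCombination.1 hw)
  · simpa only [ofPred_forall] using isClosed_iInter fun i => isClosed_le continuous_const
      (continuous_apply i)

theorem PointedCone.isClosed_hull_range [Finite ι] (v : ι → E) :
    IsClosed (hull ℝ (range v) : Set E) := by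
  have : Fintype ι := Fintype.ofFinite ι
  have hunion : (hull ℝ (range v) : Set E) =
      ⋃ t ∈ {t : Finset ι | LinearIndepOn ℝ v (t : Set ι)}, hull ℝ (v '' t) := by
    refine Subset.antisymm (fun x hx => ?_) (iUnion₂_subset fun t _ => ?_)
    · rw [← image_univ, ← Finset.coe_univ] at hx
      obtain ⟨t, -, ht, hxt⟩ := exists_linearIndepOn_mem_hull_image hx
      exact mem_biUnion ht hxt
    · exact Submodule.span_mono (image_subset_range v t)
  rw [hunion]
  refine (Set.toFinite _).isClosed_biUnion fun t ht => ?_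
  rw [image_eq_range]
  exact isClosed_hull_range_of_linearIndependent ht

end Closed

section Farkas

variable {E ι κ : Type*} [NormedAddCommGroup E] [InnerProductSpace ℝ E] [CompleteSpace E]

theorem PointedCone.mem_hull_range_of_forall_inner_nonpos [Finite ι] (v : ι → E) {c : E}
    (hc : ∀ y, (∀ i, ⟪v i, y⟫ ≤ 0) → ⟪c, y⟫ ≤ 0) : c ∈ hull ℝ (range v) := by
  by_contra hcv
  obtain ⟨y, hy, hcy⟩ := ProperCone.hyperplane_separation'
    (⟨hull ℝ (range v), isClosed_hull_range v⟩ : ProperCone ℝ E) hcv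
  have := hc (-y) fun i => by
    simpa [inner_neg_right] using hy (v i) (subset_hull (mem_range_self i))
  rw [inner_neg_right] at this
  linarith

theorem exists_pos_kkt_multipliers [Fintype ι] [Fintype κ] (a : ι → E) (b : κ → E) (A : Set κ)
    (h : ∀ y, (∀ i, ⟪a i, y⟫ ≤ 0) → (∀ j ∈ A, ⟪b j, y⟫ ≤ 0) → ∀ i, 0 ≤ ⟪a i, y⟫) :
    ∃ (lam : ι → ℝ) (μ : κ → ℝ), (∀ i, 0 < lam i) ∧ (∀ j, 0 ≤ μ j) ∧ (∀ j ∉ A, μ j = 0) ∧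
      ∑ i : ι, lam i • a i + ∑ j : κ, μ j • b j = 0 := by
  have hcone : -∑ i, a i ∈ hull ℝ (range (Sum.elim a (A.indicator b))) := by
    refine mem_hull_range_of_forall_inner_nonpos _ fun y hy => ?_
    have hb : ∀ j ∈ A, ⟪b j, y⟫ ≤ 0 := fun j hj => by
      simpa [indicator_of_mem hj] using hy (.inr j)
    simpa [inner_neg_left, sum_inner] using
      Finset.sum_nonneg fun i _ => h y (fun i => hy (.inl i)) hb i
  rw [← image_univ, ← Finset.coe_univ, mem_hull_image_finset_iff] at hcone
  obtain ⟨α, hα, hsum⟩ := hcone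
  refine ⟨fun i => 1 + α (.inl i), A.indicator (α ∘ .inr),
    fun i => by linarith [hα (.inl i) (Finset.mem_univ _)],
    fun j => indicator_nonneg (fun j _ => hα (.inr j) (Finset.mem_univ _)) j,
    fun j hj => indicator_of_notMem hj _, ?_⟩
  have hμ : ∀ j, A.indicator (α ∘ .inr) j • b j = α (.inr j) • A.indicator b j := fun j => by
    rw [← indicator_smul_apply_left, indicator_smul_apply, Function.comp_apply]
  simp only [Fintype.sum_sum_type, Sum.elim_inl, Sum.elim_inr] at hsum
  simp only [add_smul, one_smul, Finset.sum_add_distrib, hμ, add_assoc, hsum, add_neg_cancel]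

end Farkas

def IsParetoMinOn {α ι β : Type*} [Preorder β] (f : ι → α → β) (X : Set α) (x₀ : α) : Prop :=
  ¬ ∃ x ∈ X, (∀ i, f i x ≤ f i x₀) ∧ ∃ r, f r x < f r x₀

theorem IsParetoMinOn.isMinOn {α ι β : Type*} [PartialOrder β] {f : ι → α → β} {X : Set α}
    {x₀ : α} (h : IsParetoMinOn f X x₀) (i : ι) :
    IsMinOn (f i) {x ∈ X | ∀ i, f i x ≤ f i x₀} x₀ := isMinOn_iff.2 fun x ⟨hxX, hx⟩ =>
  ((hx i).eq_of_not_lt fun hlt => h ⟨x, hxX, hx, i, hlt⟩).ge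

theorem IsLocalMinOn.inner_gradient_nonneg {E : Type*} [NormedAddCommGroup E]
    [InnerProductSpace ℝ E] [CompleteSpace E] {φ : E → ℝ} {S : Set E} {x₀ a h : E}
    (hmin : IsLocalMinOn φ S x₀) (hφ : HasGradientAt φ a x₀) (hh : h ∈ posTangentConeAt S x₀) :
    0 ≤ ⟪a, h⟫ :=
  hmin.hasFDerivWithinAt_nonneg hφ.hasFDerivAt.hasFDerivWithinAt hh

theorem tangentConeOf_subset_posTangentConeAt {n : ℕ} (S : Set (EuclideanSpace ℝ (Fin n)))
    (x₀ : EuclideanSpace ℝ (Fin n)) : tangentConeOf S x₀ ⊆ posTangentConeAt S x₀ := by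
  rintro d ⟨t, y, ht, hyS, hy, htd⟩
  refine mem_tangentConeAt_of_seq Filter.atTop (fun j => (⟨t j, ht j⟩ : NNReal))
    (fun j => y j - x₀) ?_ (.of_forall fun j => by simpa using hyS j) htd
  simpa using hy.sub_const x₀

theorem pareto_strong_kkt_under_strong_abadie_general {n m k : ℕ}
    (f : Fin m → EuclideanSpace ℝ (Fin n) → ℝ)
    (g : Fin k → EuclideanSpace ℝ (Fin n) → ℝ)
    (hfdiff : ∀ i, Differentiable ℝ (f i))
    (X : Set (EuclideanSpace ℝ (Fin n)))
    (x₀ : EuclideanSpace ℝ (Fin n))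
    (hpareto : ¬ ∃ x ∈ X, (∀ i, f i x ≤ f i x₀) ∧ (∃ r, f r x < f r x₀))
    (habadie : tangentConeOf {x ∈ X | ∀ i, f i x ≤ f i x₀} x₀ =
      {h | (∀ i, ⟪gradient (f i) x₀, h⟫ ≤ 0) ∧
           (∀ r, g r x₀ = 0 → ⟪gradient (g r) x₀, h⟫ ≤ 0)}) :
    ∃ (lam : Fin m → ℝ) (μ : Fin k → ℝ),
      (∀ i, 0 < lam i) ∧ (∀ j, 0 ≤ μ j) ∧
      (∑ i, lam i • gradient (f i) x₀) + (∑ j, μ j • gradient (g j) x₀) = 0 ∧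
      (∀ j, μ j * g j x₀ = 0) := by
  obtain ⟨lam, μ, hlam, hμ, hμ_inactive, hsum⟩ :=
    exists_pos_kkt_multipliers (fun i => gradient (f i) x₀) (fun j => gradient (g j) x₀)
      {j | g j x₀ = 0} fun h hf hg i => by
        have hh : h ∈ tangentConeOf {x ∈ X | ∀ i, f i x ≤ f i x₀} x₀ := habadie ▸ ⟨hf, hg⟩
        exact (IsParetoMinOn.isMinOn hpareto i).localize.inner_gradient_nonneg
          (hfdiff i x₀).hasGradientAt (tangentConeOf_subset_posTangentConeAt _ _ hh)
  refine ⟨lam, μ, hlam, hμ, hsum, fun j => ?_⟩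
  by_cases hj : g j x₀ = 0
  · rw [hj, mul_zero]
  · rw [hμ_inactive j hj, zero_mul]

/-- Strong KKT conditions at a Pareto minimizer under the strong Abadie type
regularity condition: all objective multipliers can be taken strictly positive. -/
theorem pareto_strong_kkt_under_strong_abadie {n m k : ℕ}
    (f : Fin m → EuclideanSpace ℝ (Fin n) → ℝ)
    (g : Fin k → EuclideanSpace ℝ (Fin n) → ℝ)
    (hfconv : ∀ i, ConvexOn ℝ Set.univ (f i))
    (hfdiff : ∀ i, Differentiable ℝ (f i))
    (hgconv : ∀ j, ConvexOn ℝ Set.univ (g j))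
    (hgdiff : ∀ j, Differentiable ℝ (g j))
    (X : Set (EuclideanSpace ℝ (Fin n)))
    (hXdef : X = {x | ∀ j, g j x ≤ 0})
    (x₀ : EuclideanSpace ℝ (Fin n)) (hx₀ : x₀ ∈ X)
    (hpareto : ¬ ∃ x ∈ X, (∀ i, f i x ≤ f i x₀) ∧ (∃ r, f r x < f r x₀))
    (habadie : tangentConeOf {x ∈ X | ∀ i, f i x ≤ f i x₀} x₀ =
      {h | (∀ i, ⟪gradient (f i) x₀, h⟫ ≤ 0) ∧
           (∀ r, g r x₀ = 0 → ⟪gradient (g r) x₀, h⟫ ≤ 0)}) :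
    ∃ (lam : Fin m → ℝ) (μ : Fin k → ℝ),
      (∀ i, 0 < lam i) ∧ (∀ j, 0 ≤ μ j) ∧
      (∑ i, lam i • gradient (f i) x₀) + (∑ j, μ j • gradient (g j) x₀) = 0 ∧
      (∀ j, μ j * g j x₀ = 0) :=
  pareto_strong_kkt_under_strong_abadie_general f g hfdiff X x₀ hpareto habadie
end

section
/- Let a₁,…,a_p ∈ ℝⁿ and let V = {h ∈ ℝⁿ : ⟨aᵢ, h⟩ ≤ 0 for all i = 1,…,p}. Then the polar cone of V, namely V° = {v ∈ ℝⁿ : ⟨v, h⟩ ≤ 0 for all h ∈ V}, equals the finitely generated cone {λ₁a₁ + … + λ_p a_p : λ₁ ≥ 0, …, λ_p ≥ 0}. -/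
/-!
The finitely generated cone `K` is closed: by the conic Carathéodory theorem it is a finite union
of cones spanned by linearly independent vectors, and each of these is the image of the closed
nonnegative orthant under an injective linear map from a finite-dimensional space. The inclusion
`K ⊆ V°` is immediate. Conversely, a point `v ∉ K` is separated from the closed cone `K` by some
`y` with `0 ≤ ⟪x, y⟫` on `K` and `⟪v, y⟫ < 0`; then `-y ∈ V` and `⟪v, -y⟫ > 0`, so `v ∉ V°`.
-/

open Set
open RealInnerProductSpace

theorem Fintype.exists_pos_of_not_linearIndependent {ι R E : Type*} [Fintype ι] [Ring R]
    [LinearOrder R] [IsOrderedRing R] [AddCommGroup E] [Module R E] {v : ι → E}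
    (h : ¬LinearIndependent R v) : ∃ g : ι → R, ∑ i, g i • v i = 0 ∧ ∃ i, 0 < g i := by
  obtain ⟨g, hg, i, hi⟩ := Fintype.not_linearIndependent_iff.mp h
  rcases hi.lt_or_gt with hneg | hpos
  · exact ⟨-g, by simp [hg], i, by simpa using hneg⟩
  · exact ⟨g, hg, i, hpos⟩

/-- `r` is the largest step keeping `c - r • g` nonnegative: the minimum of `c i / g i` over the
indices with `g i > 0`. -/
theorem exists_nonneg_sub_smul_apply_eq_zero {ι R : Type*} [Fintype ι] [Field R] [LinearOrder R]
    [IsStrictOrderedRing R] {c g : ι → R} (hc : 0 ≤ c) (hg : ∃ i, 0 < g i) :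
    ∃ r : R, ∃ i₀, 0 ≤ c - r • g ∧ (c - r • g) i₀ = 0 := by
  classical
  obtain ⟨i₀, hi₀, hmin⟩ := (Finset.univ.filter (0 < g ·)).exists_min_image (fun i => c i / g i)
    (by simpa [Finset.Nonempty] using hg)
  simp only [Finset.mem_filter, Finset.mem_univ, true_and] at hi₀ hmin
  have hr : 0 ≤ c i₀ / g i₀ := div_nonneg (hc i₀) hi₀.le
  refine ⟨c i₀ / g i₀, i₀, fun i => ?_, by simp [hi₀.ne']⟩
  simp only [Pi.zero_apply, Pi.sub_apply, Pi.smul_apply, smul_eq_mul, sub_nonneg]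
  rcases lt_or_ge 0 (g i) with hgi | hgi
  · exact (le_div_iff₀ hgi).mp (hmin i hgi)
  · exact (mul_nonpos_of_nonneg_of_nonpos hr hgi).trans (hc i)

namespace PointedCone

section OrderedSemiring

variable {R E ι : Type*} [Semiring R] [PartialOrder R] [IsOrderedRing R]
  [AddCommMonoid E] [Module R E] [Fintype ι]

lemma mem_hull_range_iff {v : ι → E} {x : E} :
    x ∈ hull R (range v) ↔ ∃ c : ι → R, (∀ i, 0 ≤ c i) ∧ x = ∑ i, c i • v i := by
  rw [Submodule.mem_span_range_iff_exists_fun]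
  constructor
  · rintro ⟨c, rfl⟩
    exact ⟨fun i => c i, fun i => (c i).2, rfl⟩
  · rintro ⟨c, hc, rfl⟩
    exact ⟨fun i => ⟨c i, hc i⟩, rfl⟩

lemma coe_hull_range_eq_image_Ici (v : ι → E) :
    (hull R (range v) : Set E) = Fintype.linearCombination R v '' Ici 0 := by
  ext x
  simp [mem_hull_range_iff, Fintype.linearCombination_apply, eq_comm, Pi.le_def]

end OrderedSemiring

section LinearOrderedField

variable {R E : Type*} [Field R] [LinearOrder R] [IsStrictOrderedRing R]
  [AddCommGroup E] [Module R E]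

lemma exists_mem_hull_erase_of_not_linearIndepOn [DecidableEq E] {t : Finset E} {x : E}
    (hx : x ∈ hull R (t : Set E)) (ht : ¬LinearIndepOn R id (t : Set E)) :
    ∃ y ∈ t, x ∈ hull R (t.erase y : Set E) := by
  rw [← Subtype.range_coe (s := (t : Set E))] at hx
  obtain ⟨c, hc, rfl⟩ := mem_hull_range_iff.mp hx
  obtain ⟨g, hg, hgpos⟩ := Fintype.exists_pos_of_not_linearIndependent ht
  obtain ⟨r, y, hnonneg, hy⟩ := exists_nonneg_sub_smul_apply_eq_zero (c := c) hc hgpos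
  have hsum : ∑ i, c i • (i : E) = ∑ i, (c - r • g) i • (i : E) := by
    simp only [Pi.sub_apply, Pi.smul_apply, smul_eq_mul, sub_smul, mul_smul,
      Finset.sum_sub_distrib, ← Finset.smul_sum]
    rw [show ∑ i, g i • (i : E) = 0 from hg, smul_zero, sub_zero]
  refine ⟨y, y.2, hsum ▸ Submodule.sum_mem _ fun i _ => ?_⟩
  by_cases hiy : i = y
  · simp [hiy, hy]
  · exact smul_mem _ (hnonneg i)
      (subset_hull (Finset.mem_erase.mpr ⟨Subtype.coe_ne_coe.mpr hiy, i.2⟩))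

theorem exists_linearIndepOn_of_mem_hull (t : Finset E) {x : E} (hx : x ∈ hull R (t : Set E)) :
    ∃ u ⊆ t, LinearIndepOn R id (u : Set E) ∧ x ∈ hull R (u : Set E) := by
  classical
  induction t using Finset.strongInduction with
  | H t ih =>
    by_cases ht : LinearIndepOn R id (t : Set E)
    · exact ⟨t, subset_rfl, ht, hx⟩
    · obtain ⟨y, hy, hxy⟩ := exists_mem_hull_erase_of_not_linearIndepOn hx ht
      obtain ⟨u, hu, hli, hxu⟩ := ih _ (Finset.erase_ssubset hy) hxy
      exact ⟨u, hu.trans (Finset.erase_subset _ _), hli, hxu⟩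

end LinearOrderedField

section Real

variable {E : Type*} [NormedAddCommGroup E] [NormedSpace ℝ E]

lemma isClosed_hull_of_linearIndepOn {t : Finset E} (ht : LinearIndepOn ℝ id (t : Set E)) :
    IsClosed (hull ℝ (t : Set E) : Set E) := by
  rw [← Subtype.range_coe (s := (t : Set E)), coe_hull_range_eq_image_Ici]
  have hinj := linearIndependent_iff_injective_fintypeLinearCombination.mp ht
  exact (LinearMap.isClosedEmbedding_of_injective (LinearMap.ker_eq_bot.mpr hinj)).isClosedMap _
    isClosed_Ici

theorem isClosed_hull_of_finite {s : Set E} (hs : s.Finite) : IsClosed (hull ℝ s : Set E) := by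
  obtain ⟨s, rfl⟩ := hs.exists_finset_coe
  have hunion : (hull ℝ (s : Set E) : Set E) =
      ⋃ u ∈ {u : Finset E | u ⊆ s ∧ LinearIndepOn ℝ id (u : Set E)},
        (hull ℝ (u : Set E) : Set E) := by
    ext x
    simp only [mem_iUnion, mem_ofPred_eq, SetLike.mem_coe, exists_prop]
    constructor
    · intro hx
      obtain ⟨u, hu, hli, hxu⟩ := exists_linearIndepOn_of_mem_hull s hx
      exact ⟨u, ⟨hu, hli⟩, hxu⟩
    · rintro ⟨u, ⟨hu, -⟩, hxu⟩
      exact Submodule.span_mono (Finset.coe_subset.mpr hu) hxu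
  have hfin : {u : Finset E | u ⊆ s ∧ LinearIndepOn ℝ id (u : Set E)}.Finite :=
    s.powerset.finite_toSet.subset fun u hu => Finset.mem_powerset.mpr hu.1
  rw [hunion]
  exact hfin.isClosed_biUnion fun u hu => isClosed_hull_of_linearIndepOn hu.2

end Real

end PointedCone

/-- Farkas. The polar cone of the polyhedral cone
`V = {h : ⟪aᵢ, h⟫ ≤ 0 ∀ i}` is the finitely generated cone `{∑ i, λᵢ • aᵢ : λᵢ ≥ 0}`. -/
theorem polar_of_polyhedral_cone_eq_finitely_generated {n p : ℕ}
    (a : Fin p → EuclideanSpace ℝ (Fin n)) :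
    {v : EuclideanSpace ℝ (Fin n) |
        ∀ h ∈ {h : EuclideanSpace ℝ (Fin n) | ∀ i, ⟪a i, h⟫ ≤ 0}, ⟪v, h⟫ ≤ 0} =
      {v : EuclideanSpace ℝ (Fin n) |
        ∃ lam : Fin p → ℝ, (∀ i, 0 ≤ lam i) ∧ v = ∑ i, lam i • a i} := by
  ext v
  rw [mem_ofPred_eq, mem_ofPred_eq, ← PointedCone.mem_hull_range_iff]
  constructor
  · intro hv
    by_contra hvK
    obtain ⟨y, hyK, hyv⟩ := ProperCone.hyperplane_separation'
      ⟨PointedCone.hull ℝ (range a), PointedCone.isClosed_hull_of_finite (finite_range a)⟩ hvK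
    have hy : ∀ i, ⟪a i, -y⟫ ≤ 0 := fun i => by
      simpa [inner_neg_right] using hyK (a i) (PointedCone.subset_hull (mem_range_self i))
    have := hv (-y) hy
    rw [inner_neg_right] at this
    linarith
  · intro hv h hh
    obtain ⟨lam, hlam, rfl⟩ := PointedCone.mem_hull_range_iff.mp hv
    rw [sum_inner]
    exact Finset.sum_nonpos fun i _ => by
      rw [real_inner_smul_left]
      exact mul_nonpos_of_nonneg_of_nonpos (hlam i) (hh i)
end
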